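/- arXiv:2408.03756 — 6 statements merged into one kernel-verified Lean document; each statement's English description precedes it below -/
import Mathlib

section
/- Let S ∈ ℝ^{p×p} and T ∈ ℝ^{m×m} be diagonal matrices with nonnegative entries, σ² > 0, and assume tr(T) > 0. Writing T/tr(T) = Σ_{i=1}^{m} t_i diag(e_i) with Σ t_i = 1, t_i ≥ 0, one has log det(I + (1/σ²) tr(T) S ⊗ (T/tr(T))) ≥ Σ_i t_i · log det(I + (1/σ²) tr(T) S ⊗ diag(e_i)) = log det(I + (1/σ²) tr(T) S); in particular log det(I + (1/σ²) S ⊗ T) ≥ log det(I + (1/σ²) tr(T) S). -/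
open Matrix Kronecker

lemma det_aux {n : Type*} [Fintype n] [DecidableEq n] (v : n → ℝ) (c : ℝ) :
    (1 + c • Matrix.diagonal v).det = ∏ i, (1 + c * v i) := by
  rw [← Matrix.diagonal_one, ← Matrix.diagonal_smul, Matrix.diagonal_add,
    Matrix.det_diagonal]
  simp

lemma concave_aux {x l : ℝ} (hx : 1 ≤ x) (h0 : 0 ≤ l) (h1 : l ≤ 1) :
    l * Real.log x ≤ Real.log (1 + l * (x - 1)) := by
  have h := strictConcaveOn_log_Ioi.concaveOn.2
    (show x ∈ Set.Ioi (0:ℝ) from lt_of_lt_of_le one_pos hx)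
    (show (1:ℝ) ∈ Set.Ioi (0:ℝ) by simp) h0 (show (0:ℝ) ≤ 1 - l by linarith)
    (by ring)
  have e : l • x + (1 - l) • (1:ℝ) = 1 + l * (x - 1) := by simp [smul_eq_mul]; ring
  rw [e] at h
  simpa [smul_eq_mul] using h

/-- For diagonal `S = diag(s) ∈ ℝ^{p×p}`, `T = diag(t) ∈ ℝ^{m×m}` with
nonnegative entries, `σ² > 0` and `tr T > 0`, writing `T/tr(T) = Σ_i t_i diag(e_i)`,
one has
`log det(I + (1/σ²) tr(T) S ⊗ (T/tr T)) ≥ Σ_i (t_i/tr T) log det(I + (1/σ²) tr(T) S ⊗ diag(e_i))`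
and the right-hand side equals `log det(I + (1/σ²) tr(T) S)`. -/
theorem stmt1 {p m : ℕ} (s : Fin p → ℝ) (t : Fin m → ℝ)
    (hs : ∀ i, 0 ≤ s i) (ht : ∀ i, 0 ≤ t i) (σsq : ℝ) (hσ : 0 < σsq)
    (htr : 0 < (Matrix.diagonal t).trace) :
    (Real.log ((1 + (1 / σsq) •
          (((Matrix.diagonal t).trace • Matrix.diagonal s) ⊗ₖ
            ((Matrix.diagonal t).trace⁻¹ • Matrix.diagonal t))).det)
        ≥ ∑ i : Fin m, (t i / (Matrix.diagonal t).trace) *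
            Real.log ((1 + (1 / σsq) •
              (((Matrix.diagonal t).trace • Matrix.diagonal s) ⊗ₖ
                Matrix.diagonal (Pi.single i (1 : ℝ)))).det))
    ∧ (∑ i : Fin m, (t i / (Matrix.diagonal t).trace) *
          Real.log ((1 + (1 / σsq) •
            (((Matrix.diagonal t).trace • Matrix.diagonal s) ⊗ₖ
              Matrix.diagonal (Pi.single i (1 : ℝ)))).det))
        = Real.log ((1 + (1 / σsq) • ((Matrix.diagonal t).trace • Matrix.diagonal s)).det) := by
  set τ := (Matrix.diagonal t).trace with hτdef
  have hτsum : τ = ∑ i, t i := by simp [hτdef, Matrix.trace_diagonal]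
  have hτ : 0 < τ := htr
  have hτ0 : τ ≠ 0 := ne_of_gt hτ
  have hσ0 : σsq ≠ 0 := ne_of_gt hσ
  -- det 1
  have e1 : (1 + (1 / σsq) •
        ((τ • Matrix.diagonal s) ⊗ₖ (τ⁻¹ • Matrix.diagonal t))).det
      = ∏ ji : Fin p × Fin m, (1 + s ji.1 * t ji.2 / σsq) := by
    rw [← Matrix.diagonal_smul τ s, ← Matrix.diagonal_smul τ⁻¹ t,
      Matrix.diagonal_kronecker_diagonal, det_aux]
    refine Finset.prod_congr rfl fun ji _ => ?_
    simp only [Pi.smul_apply, smul_eq_mul]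
    field_simp
  -- det 2
  have e2 : ∀ i : Fin m, (1 + (1 / σsq) •
        ((τ • Matrix.diagonal s) ⊗ₖ Matrix.diagonal (Pi.single i (1:ℝ)))).det
      = ∏ j, (1 + τ * s j / σsq) := by
    intro i
    rw [← Matrix.diagonal_smul τ s, Matrix.diagonal_kronecker_diagonal, det_aux,
      Fintype.prod_prod_type]
    refine Finset.prod_congr rfl fun j _ => ?_
    rw [Finset.prod_eq_single i]
    · simp only [Pi.smul_apply, smul_eq_mul, Pi.single_eq_same, mul_one]
      field_simp
    · intro k _ hk; simp [Pi.single_eq_of_ne hk]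
    · simp
  -- det 3
  have e3 : (1 + (1 / σsq) • (τ • Matrix.diagonal s)).det
      = ∏ j, (1 + τ * s j / σsq) := by
    rw [← Matrix.diagonal_smul τ s, det_aux]
    refine Finset.prod_congr rfl fun j _ => ?_
    simp only [Pi.smul_apply, smul_eq_mul]
    field_simp
  have hf1 : ∀ j, (1:ℝ) ≤ 1 + τ * s j / σsq := fun j => by
    have : 0 ≤ τ * s j / σsq := div_nonneg (mul_nonneg hτ.le (hs j)) hσ.le
    linarith
  have hg1 : ∀ (j : Fin p) (i : Fin m), (0:ℝ) < 1 + s j * t i / σsq := fun j i => by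
    have : 0 ≤ s j * t i / σsq := div_nonneg (mul_nonneg (hs j) (ht i)) hσ.le
    linarith
  -- logs
  have l2 : ∀ i : Fin m, Real.log ((1 + (1 / σsq) •
        ((τ • Matrix.diagonal s) ⊗ₖ Matrix.diagonal (Pi.single i (1:ℝ)))).det)
      = ∑ j, Real.log (1 + τ * s j / σsq) := by
    intro i
    rw [e2 i, Real.log_prod]
    intro j _; exact ne_of_gt (lt_of_lt_of_le one_pos (hf1 j))
  have l1 : Real.log ((1 + (1 / σsq) •
        ((τ • Matrix.diagonal s) ⊗ₖ (τ⁻¹ • Matrix.diagonal t))).det)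
      = ∑ ji : Fin p × Fin m, Real.log (1 + s ji.1 * t ji.2 / σsq) := by
    rw [e1, Real.log_prod]
    intro ji _; exact ne_of_gt (hg1 ji.1 ji.2)
  have l3 : Real.log ((1 + (1 / σsq) • (τ • Matrix.diagonal s)).det)
      = ∑ j, Real.log (1 + τ * s j / σsq) := by
    rw [e3, Real.log_prod]
    intro j _; exact ne_of_gt (lt_of_lt_of_le one_pos (hf1 j))
  have hsum1 : ∑ i : Fin m, t i / τ = 1 := by
    rw [← Finset.sum_div, ← hτsum, div_self hτ0]
  constructor
  · rw [l1]
    calc ∑ i : Fin m, (t i / τ) * Real.log ((1 + (1 / σsq) •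
            ((τ • Matrix.diagonal s) ⊗ₖ Matrix.diagonal (Pi.single i (1:ℝ)))).det)
        = ∑ i : Fin m, ∑ j : Fin p, (t i / τ) * Real.log (1 + τ * s j / σsq) := by
          refine Finset.sum_congr rfl fun i _ => ?_
          rw [l2 i, Finset.mul_sum]
      _ ≤ ∑ i : Fin m, ∑ j : Fin p, Real.log (1 + s j * t i / σsq) := by
          refine Finset.sum_le_sum fun i _ => Finset.sum_le_sum fun j _ => ?_
          have hl0 : 0 ≤ t i / τ := div_nonneg (ht i) hτ.le
          have hl1 : t i / τ ≤ 1 := by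
            rw [div_le_one hτ, hτsum]
            exact Finset.single_le_sum (fun k _ => ht k) (Finset.mem_univ i)
          have key := concave_aux (hf1 j) hl0 hl1
          have e : 1 + (t i / τ) * ((1 + τ * s j / σsq) - 1) = 1 + s j * t i / σsq := by
            field_simp
            ring
          rwa [e] at key
      _ = ∑ ji : Fin p × Fin m, Real.log (1 + s ji.1 * t ji.2 / σsq) := by
          rw [Fintype.sum_prod_type]
          exact Finset.sum_comm
  · rw [l3]
    rw [Finset.sum_congr rfl fun i _ => by rw [l2 i], ← Finset.sum_mul, hsum1, one_mul]
end

section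
/- Let C_tx ∈ ℂ^{n×n} and C_rx ∈ ℂ^{m×m} be positive semidefinite Hermitian matrices with tr(C_rx) > 0, P ∈ ℂ^{p×n}, and σ² > 0. Then log det(I + (1/σ²)(P C_tx P^H) ⊗ C_rx) ≥ log det(I + (1/σ²) tr(C_rx) · P C_tx P^H). -/
open Matrix Kronecker
open scoped ComplexOrder

/-!
Diagonalise `A = P C_tx Pᴴ` and `C_rx` by unitaries, with eigenvalues `aᵢ, c_j ≥ 0`. The
Kronecker product is diagonalised by the Kronecker product of the unitaries, so the two
determinants are `∏_{i,j} (1 + aᵢ c_j / σ²)` and `∏ᵢ (1 + aᵢ (∑_j c_j) / σ²)`, and they compare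
factor by factor through `1 + ∑_j x_j ≤ ∏_j (1 + x_j)` for `x_j ≥ 0`.
-/

theorem Finset.one_add_sum_le_prod_one_add {ι R : Type*} [CommSemiring R] [PartialOrder R]
    [IsOrderedRing R] (s : Finset ι) {f : ι → R} (hf : ∀ i ∈ s, 0 ≤ f i) :
    1 + ∑ i ∈ s, f i ≤ ∏ i ∈ s, (1 + f i) := by
  classical
  induction s using Finset.induction_on with
  | empty => simp
  | insert a s ha ih =>
    rw [Finset.sum_insert ha, Finset.prod_insert ha]
    have hfa : 0 ≤ f a := hf a (Finset.mem_insert_self a s)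
    have hs : ∀ i ∈ s, 0 ≤ f i := fun i hi => hf i (Finset.mem_insert_of_mem hi)
    calc 1 + (f a + ∑ i ∈ s, f i)
        ≤ 1 + (f a + ∑ i ∈ s, f i) + f a * ∑ i ∈ s, f i :=
          le_add_of_nonneg_right (mul_nonneg hfa (Finset.sum_nonneg hs))
      _ = (1 + f a) * (1 + ∑ i ∈ s, f i) := by ring
      _ ≤ (1 + f a) * ∏ i ∈ s, (1 + f i) :=
          mul_le_mul_of_nonneg_left (ih hs) (add_nonneg zero_le_one hfa)

theorem prod_one_add_mul_sum_le_prod_one_add_mul {ι κ : Type*} [Fintype ι] [Fintype κ]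
    {r : ℝ} {x : ι → ℝ} {y : κ → ℝ} (hr : 0 ≤ r) (hx : ∀ i, 0 ≤ x i) (hy : ∀ j, 0 ≤ y j) :
    ∏ i, (1 + (r * ∑ j, y j) * x i) ≤ ∏ ij : ι × κ, (1 + r * (x ij.1 * y ij.2)) := by
  rw [Fintype.prod_prod_type]
  refine Finset.prod_le_prod (fun i _ => ?_) fun i _ => ?_
  · exact add_nonneg zero_le_one (mul_nonneg (mul_nonneg hr (Fintype.sum_nonneg hy)) (hx i))
  · have hsum : (r * ∑ j, y j) * x i = ∑ j, r * (x i * y j) := by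
      rw [Finset.mul_sum, Finset.sum_mul]
      exact Finset.sum_congr rfl fun j _ => by ring
    rw [hsum]
    exact Finset.univ.one_add_sum_le_prod_one_add fun j _ =>
      mul_nonneg hr (mul_nonneg (hx i) (hy j))

namespace Matrix

variable {ι κ 𝕜 : Type*} [Fintype ι] [DecidableEq ι] [Fintype κ] [DecidableEq κ] [RCLike 𝕜]

theorem det_one_add_smul_unitary_conj_diagonal {u : Matrix ι ι 𝕜} (hu : u ∈ unitary _)
    (d : ι → ℝ) (r : ℝ) :
    det (1 + r • (u * diagonal (fun i => (d i : 𝕜)) * star u))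
      = ((∏ i, (1 + r * d i) : ℝ) : 𝕜) := by
  have hconj : 1 + r • (u * diagonal (fun i => (d i : 𝕜)) * star u)
      = u * diagonal (fun i => ((1 + r * d i : ℝ) : 𝕜)) * star u := by
    have hdiag : diagonal (fun i => ((1 + r * d i : ℝ) : 𝕜))
        = 1 + r • diagonal (fun i => (d i : 𝕜)) := by
      ext i j
      by_cases hij : i = j <;> simp [hij, RCLike.real_smul_eq_coe_mul]
    rw [hdiag, Matrix.mul_add, Matrix.add_mul, Matrix.mul_one, hu.2, Matrix.mul_smul,
      Matrix.smul_mul]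
  rw [hconj, det_conj_of_mul_eq_one hu.2 hu.1, det_diagonal, RCLike.ofReal_prod]

theorem IsHermitian.det_one_add_smul {A : Matrix ι ι 𝕜} (hA : A.IsHermitian) (r : ℝ) :
    det (1 + r • A) = ((∏ i, (1 + r * hA.eigenvalues i) : ℝ) : 𝕜) := by
  conv_lhs => rw [hA.spectral_theorem, Unitary.conjStarAlgAut_apply]
  exact det_one_add_smul_unitary_conj_diagonal hA.eigenvectorUnitary.2 _ r

theorem IsHermitian.det_one_add_smul_kronecker {A : Matrix ι ι 𝕜} {B : Matrix κ κ 𝕜}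
    (hA : A.IsHermitian) (hB : B.IsHermitian) (r : ℝ) :
    det (1 + r • (A ⊗ₖ B))
      = ((∏ ij : ι × κ, (1 + r * (hA.eigenvalues ij.1 * hB.eigenvalues ij.2)) : ℝ) : 𝕜) := by
  set U : Matrix ι ι 𝕜 := (hA.eigenvectorUnitary : Matrix ι ι 𝕜)
  set V : Matrix κ κ 𝕜 := (hB.eigenvectorUnitary : Matrix κ κ 𝕜)
  have hkron : A ⊗ₖ B = (U ⊗ₖ V)
      * diagonal (fun ij : ι × κ => ((hA.eigenvalues ij.1 * hB.eigenvalues ij.2 : ℝ) : 𝕜))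
      * star (U ⊗ₖ V) := by
    conv_lhs => rw [hA.spectral_theorem, hB.spectral_theorem]
    simp only [Unitary.conjStarAlgAut_apply, star_eq_conjTranspose, conjTranspose_kronecker,
      mul_kronecker_mul, diagonal_kronecker_diagonal, RCLike.ofReal_mul, Function.comp_apply, U, V]
  rw [hkron]
  exact det_one_add_smul_unitary_conj_diagonal
    (kronecker_mem_unitary hA.eigenvectorUnitary.2 hB.eigenvectorUnitary.2) _ r

end Matrix

theorem stmt2_general {n m p : ℕ} (Ctx : Matrix (Fin n) (Fin n) ℂ) (Crx : Matrix (Fin m) (Fin m) ℂ)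
    (hCtx : Ctx.PosSemidef) (hCrx : Crx.PosSemidef)
    (P : Matrix (Fin p) (Fin n) ℂ) (σsq : ℝ) (hσ : 0 < σsq) :
    Real.log ((1 + (1 / σsq) • ((P * Ctx * Pᴴ) ⊗ₖ Crx)).det.re)
      ≥ Real.log ((1 + (1 / σsq) • (Crx.trace • (P * Ctx * Pᴴ))).det.re) := by
  have hA : (P * Ctx * Pᴴ).PosSemidef := hCtx.mul_mul_conjTranspose_same P
  have ht : 0 ≤ 1 / σsq := by positivity
  have hscalar : (1 / σsq) • (Crx.trace • (P * Ctx * Pᴴ))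
      = (1 / σsq * ∑ j, hCrx.1.eigenvalues j) • (P * Ctx * Pᴴ) := by
    rw [hCrx.1.trace_eq_sum_eigenvalues, ← RCLike.ofReal_sum, ← RCLike.real_smul_eq_coe_smul,
      smul_smul]
  rw [ge_iff_le, hscalar, hA.1.det_one_add_smul, hA.1.det_one_add_smul_kronecker hCrx.1,
    ← RCLike.re_to_complex, ← RCLike.re_to_complex, RCLike.ofReal_re, RCLike.ofReal_re]
  have hr : 0 ≤ 1 / σsq * ∑ j, hCrx.1.eigenvalues j :=
    mul_nonneg ht (Fintype.sum_nonneg hCrx.eigenvalues_nonneg)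
  exact Real.log_le_log
    (Finset.prod_pos fun i _ =>
      add_pos_of_pos_of_nonneg one_pos (mul_nonneg hr (hA.eigenvalues_nonneg i)))
    (prod_one_add_mul_sum_le_prod_one_add_mul ht hA.eigenvalues_nonneg hCrx.eigenvalues_nonneg)

/-- For PSD Hermitian `C_tx ∈ ℂ^{n×n}`, `C_rx ∈ ℂ^{m×m}` with `tr C_rx > 0`,
`P ∈ ℂ^{p×n}` and `σ² > 0`,
`log det(I + (1/σ²)(P C_tx P^H) ⊗ C_rx) ≥ log det(I + (1/σ²) tr(C_rx) P C_tx P^H)`. -/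
theorem stmt2 {n m p : ℕ} (Ctx : Matrix (Fin n) (Fin n) ℂ) (Crx : Matrix (Fin m) (Fin m) ℂ)
    (hCtx : Ctx.PosSemidef) (hCrx : Crx.PosSemidef) (htr : 0 < Crx.trace.re)
    (P : Matrix (Fin p) (Fin n) ℂ) (σsq : ℝ) (hσ : 0 < σsq) :
    Real.log ((1 + (1 / σsq) • ((P * Ctx * Pᴴ) ⊗ₖ Crx)).det.re)
      ≥ Real.log ((1 + (1 / σsq) • (Crx.trace • (P * Ctx * Pᴴ))).det.re) :=
  stmt2_general Ctx Crx hCtx hCrx P σsq hσ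
end

section
/- Let C_tx ∈ ℂ^{n×n} and C_rx ∈ ℂ^{m×m} be positive semidefinite Hermitian, P ∈ ℂ^{p×n}, σ² > 0, and suppose rank(C_rx) = 1. Then log det(I + (1/σ²)(P C_tx P^H) ⊗ C_rx) = log det(I + (1/σ²) tr(C_rx) · P C_tx P^H). -/
open Matrix Kronecker
open scoped ComplexOrder

/-! A matrix of rank at most one is an outer product `u wᵀ`, so `A ⊗ (u wᵀ)` factors as `L M`
with `M L = (wᵀ u) A = tr(u wᵀ) A`; Sylvester's identity `det (1 + L M) = det (1 + M L)` then
removes the Kronecker factor. -/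

namespace Matrix

theorem exists_eq_vecMulVec_of_rank_le_one {m n K : Type*} [Fintype n] [Field K]
    (B : Matrix m n K) (hB : B.rank ≤ 1) : ∃ u w, B = vecMulVec u w := by
  classical
  obtain ⟨v, hv⟩ := finrank_le_one_iff.mp hB
  choose c hc using fun j => hv ⟨B.col j, Pi.single j 1, B.mulVec_single_one j⟩
  refine ⟨v, c, ext fun i j => ?_⟩
  rw [vecMulVec_apply, mul_comm, ← col_apply B j i]
  exact (congrFun (congrArg Subtype.val (hc j)) i).symm

theorem det_one_add_kronecker_vecMulVec {ι κ R : Type*} [Fintype ι] [Fintype κ]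
    [DecidableEq ι] [DecidableEq κ] [CommRing R] (A : Matrix ι ι R) (u w : κ → R) :
    (1 + A ⊗ₖ vecMulVec u w).det = (1 + (u ⬝ᵥ w) • A).det := by
  let L : Matrix (ι × κ) ι R := of fun ik j => A ik.1 j * u ik.2
  let M : Matrix ι (ι × κ) R := of fun j ik => if j = ik.1 then w ik.2 else 0
  have hLM : L * M = A ⊗ₖ vecMulVec u w := by
    ext ⟨i, k⟩ ⟨i', k'⟩
    simp [L, M, mul_apply, vecMulVec_apply, mul_assoc]
  have hML : M * L = (u ⬝ᵥ w) • A := by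
    ext j j'
    simp only [L, M, mul_apply, of_apply, Fintype.sum_prod_type_right, ite_mul, zero_mul,
      Finset.sum_ite_eq, Finset.mem_univ, if_true, smul_apply, smul_eq_mul, dotProduct,
      Finset.sum_mul]
    exact Finset.sum_congr rfl fun k _ => by ring
  rw [← hLM, det_one_add_mul_comm, hML]

theorem det_one_add_kronecker_of_rank_le_one {ι κ K : Type*} [Fintype ι] [Fintype κ]
    [DecidableEq ι] [DecidableEq κ] [Field K] (A : Matrix ι ι K) {B : Matrix κ κ K}
    (hB : B.rank ≤ 1) : (1 + A ⊗ₖ B).det = (1 + B.trace • A).det := by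
  obtain ⟨u, w, rfl⟩ := B.exists_eq_vecMulVec_of_rank_le_one hB
  rw [trace_vecMulVec, det_one_add_kronecker_vecMulVec]

end Matrix

theorem stmt3_general {n m p : ℕ} (Ctx : Matrix (Fin n) (Fin n) ℂ) (Crx : Matrix (Fin m) (Fin m) ℂ)
    (hrk : Crx.rank = 1)
    (P : Matrix (Fin p) (Fin n) ℂ) (σsq : ℝ) :
    Real.log ((1 + (1 / σsq) • ((P * Ctx * Pᴴ) ⊗ₖ Crx)).det.re)
      = Real.log ((1 + (1 / σsq) • (Crx.trace • (P * Ctx * Pᴴ))).det.re) := by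
  rw [← smul_kronecker, det_one_add_kronecker_of_rank_le_one _ hrk.le, smul_comm]

/-- For PSD Hermitian `C_tx`, `C_rx` with `rank C_rx = 1`, `P ∈ ℂ^{p×n}`,
`σ² > 0`:
`log det(I + (1/σ²)(P C_tx P^H) ⊗ C_rx) = log det(I + (1/σ²) tr(C_rx) P C_tx P^H)`. -/
theorem stmt3 {n m p : ℕ} (Ctx : Matrix (Fin n) (Fin n) ℂ) (Crx : Matrix (Fin m) (Fin m) ℂ)
    (hCtx : Ctx.PosSemidef) (hCrx : Crx.PosSemidef) (hrk : Crx.rank = 1)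
    (P : Matrix (Fin p) (Fin n) ℂ) (σsq : ℝ) (hσ : 0 < σsq) :
    Real.log ((1 + (1 / σsq) • ((P * Ctx * Pᴴ) ⊗ₖ Crx)).det.re)
      = Real.log ((1 + (1 / σsq) • (Crx.trace • (P * Ctx * Pᴴ))).det.re) :=
  stmt3_general Ctx Crx hrk P σsq
end

section
/- Let C_tx ∈ ℂ^{n×n} be positive semidefinite Hermitian, P ∈ ℂ^{p×n} with P C_tx P^H ≠ 0, σ² > 0, and let C_rx ∈ ℂ^{m×m} (m ≥ 2) be positive semidefinite Hermitian with tr(C_rx) = τ > 0 and C_rx ≠ (τ/m) I. Then log det(I + (1/σ²)(P C_tx P^H) ⊗ C_rx) < log det(I + (1/σ²)(P C_tx P^H) ⊗ (τ/m) I), i.e., among all receive covariances with fixed trace τ, the CMI (and hence the gap to the trace-based lower bound) is maximized uniquely by the scaled identity. -/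
open Matrix Kronecker
open scoped ComplexOrder

/-!
If `A = U diag(λ) Uᴴ` and `B = V diag(μ) Vᴴ` with `U`, `V` unitary, then `1 + s (A ⊗ B)` is
conjugate by the unitary `U ⊗ V` to a diagonal matrix, so its determinant is
`∏ᵢ ∏ⱼ (1 + s λᵢ μⱼ)`; for `B = (τ/m) I` every `μⱼ` is replaced by their mean `τ/m`.
Taking logarithms, for each `i` strict concavity of `log` (Jensen) gives
`∑ⱼ log (1 + s λᵢ μⱼ) ≤ m log (1 + s λᵢ τ/m)`, strictly as soon as `λᵢ > 0` and `μ` is not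
constant. Some `λᵢ` is positive because `P C_tx Pᴴ` is positive semidefinite and nonzero, and
the eigenvalues of `C_rx` are not constant because otherwise `C_rx = (τ/m) I`.
-/

section Jensen

variable {κ : Type*} [Fintype κ]

theorem ConcaveOn.sum_le_card_mul_map_mean [Nonempty κ] {s : Set ℝ} {f : ℝ → ℝ}
    (hf : ConcaveOn ℝ s f) {x : κ → ℝ} (hx : ∀ j, x j ∈ s) :
    ∑ j, f (x j) ≤ Fintype.card κ * f ((∑ j, x j) / Fintype.card κ) := by
  have hcard : (0 : ℝ) < Fintype.card κ := by exact_mod_cast Fintype.card_pos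
  have h := hf.le_map_sum (t := Finset.univ) (w := fun _ => (Fintype.card κ : ℝ)⁻¹)
    (fun _ _ => by positivity) (by simp [hcard.ne']) (fun j _ => hx j)
  simp only [smul_eq_mul, ← Finset.mul_sum] at h
  rw [div_eq_inv_mul]
  exact (inv_mul_le_iff₀ hcard).mp h

theorem StrictConcaveOn.sum_lt_card_mul_map_mean {s : Set ℝ} {f : ℝ → ℝ}
    (hf : StrictConcaveOn ℝ s f) {x : κ → ℝ} (hx : ∀ j, x j ∈ s) (hne : ∃ j k, x j ≠ x k) :
    ∑ j, f (x j) < Fintype.card κ * f ((∑ j, x j) / Fintype.card κ) := by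
  obtain ⟨j, k, hjk⟩ := hne
  have : Nonempty κ := ⟨j⟩
  have hcard : (0 : ℝ) < Fintype.card κ := by exact_mod_cast Fintype.card_pos
  have h := hf.lt_map_sum (t := Finset.univ) (w := fun _ => (Fintype.card κ : ℝ)⁻¹)
    (fun _ _ => by positivity) (by simp [hcard.ne']) (fun j _ => hx j)
    ⟨j, Finset.mem_univ _, k, Finset.mem_univ _, hjk⟩
  simp only [smul_eq_mul, ← Finset.mul_sum] at h
  rw [div_eq_inv_mul]
  exact (inv_mul_lt_iff₀ hcard).mp h

theorem sum_one_add_mul_div_card [Nonempty κ] (a : ℝ) (b : κ → ℝ) :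
    (∑ j, (1 + a * b j)) / Fintype.card κ = 1 + a * ((∑ j, b j) / Fintype.card κ) := by
  have hcard : (Fintype.card κ : ℝ) ≠ 0 := by exact_mod_cast Fintype.card_ne_zero
  rw [Finset.sum_add_distrib, ← Finset.mul_sum, Finset.sum_const, Finset.card_univ, nsmul_one]
  field_simp

theorem sum_log_one_add_mul_le [Nonempty κ] {a : ℝ} (ha : 0 ≤ a) {b : κ → ℝ}
    (hb : ∀ j, 0 ≤ b j) :
    ∑ j, Real.log (1 + a * b j) ≤
      Fintype.card κ * Real.log (1 + a * ((∑ j, b j) / Fintype.card κ)) := by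
  rw [← sum_one_add_mul_div_card]
  exact strictConcaveOn_log_Ioi.concaveOn.sum_le_card_mul_map_mean fun j =>
    show 0 < 1 + a * b j by nlinarith [hb j]

theorem sum_log_one_add_mul_lt {a : ℝ} (ha : 0 < a) {b : κ → ℝ} (hb : ∀ j, 0 ≤ b j)
    (hne : ∃ j k, b j ≠ b k) :
    ∑ j, Real.log (1 + a * b j) <
      Fintype.card κ * Real.log (1 + a * ((∑ j, b j) / Fintype.card κ)) := by
  obtain ⟨j, k, hjk⟩ := hne
  have : Nonempty κ := ⟨j⟩
  rw [← sum_one_add_mul_div_card]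
  refine strictConcaveOn_log_Ioi.sum_lt_card_mul_map_mean
    (fun j => show 0 < 1 + a * b j by nlinarith [hb j]) ⟨j, k, ?_⟩
  simpa [ha.ne'] using hjk

theorem log_prod_prod_one_add_mul_lt {ι : Type*} [Fintype ι] {a : ι → ℝ}
    (ha : ∀ i, 0 ≤ a i) (ha' : ∃ i, 0 < a i) {b : κ → ℝ} (hb : ∀ j, 0 ≤ b j)
    (hne : ∃ j k, b j ≠ b k) :
    Real.log (∏ i, ∏ j, (1 + a i * b j)) <
      Real.log (∏ i, ∏ _j : κ, (1 + a i * ((∑ j, b j) / Fintype.card κ))) := by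
  have hlog (x : κ → ℝ) (hx : ∀ j, 0 ≤ x j) :
      Real.log (∏ i, ∏ j, (1 + a i * x j)) = ∑ i, ∑ j, Real.log (1 + a i * x j) := by
    have hpos i j : 0 < 1 + a i * x j := by nlinarith [ha i, hx j]
    rw [Real.log_prod fun i _ => (Finset.prod_pos fun j _ => hpos i j).ne']
    exact Finset.sum_congr rfl fun i _ => Real.log_prod fun j _ => (hpos i j).ne'
  have hmean : 0 ≤ (∑ j, b j) / Fintype.card κ :=
    div_nonneg (Finset.sum_nonneg fun j _ => hb j) (Nat.cast_nonneg _)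
  obtain ⟨j, k, hjk⟩ := hne
  have : Nonempty κ := ⟨j⟩
  obtain ⟨i₀, hi₀⟩ := ha'
  rw [hlog b hb, hlog _ fun _ => hmean]
  refine Finset.sum_lt_sum (fun i _ => ?_) ⟨i₀, Finset.mem_univ _, ?_⟩
  · simpa using sum_log_one_add_mul_le (ha i) hb
  · simpa using sum_log_one_add_mul_lt hi₀ hb ⟨j, k, hjk⟩

end Jensen

section Kronecker

variable {R ι κ : Type*} [CommRing R] [StarRing R] [Fintype ι] [DecidableEq ι] [Fintype κ]
  [DecidableEq κ]

theorem det_one_add_kronecker_conj_diagonal {U : Matrix ι ι R} {V : Matrix κ κ R}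
    (hU : U ∈ unitaryGroup ι R) (hV : V ∈ unitaryGroup κ R) (a : ι → R) (b : κ → R) :
    det (1 + (U * diagonal a * star U) ⊗ₖ (V * diagonal b * star V)) =
      ∏ i, ∏ j, (1 + a i * b j) := by
  have hW := kronecker_mem_unitary hU hV
  have hstar : star (U ⊗ₖ V) = star U ⊗ₖ star V := by
    simp only [star_eq_conjTranspose, conjTranspose_kronecker]
  calc det (1 + (U * diagonal a * star U) ⊗ₖ (V * diagonal b * star V))
      = det ((U ⊗ₖ V) * (1 + diagonal a ⊗ₖ diagonal b) * star (U ⊗ₖ V)) := by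
        rw [mul_add, add_mul, mul_one, Unitary.mul_star_self_of_mem hW, hstar,
          ← mul_kronecker_mul, ← mul_kronecker_mul]
    _ = det (1 + diagonal a ⊗ₖ diagonal b) :=
        det_conj_of_mul_eq_one (Unitary.mul_star_self_of_mem hW) (Unitary.star_mul_self_of_mem hW)
    _ = ∏ i, ∏ j, (1 + a i * b j) := by
        rw [diagonal_kronecker_diagonal, ← diagonal_one, diagonal_add, det_diagonal,
          Fintype.prod_prod_type]

end Kronecker

section Hermitian

variable {𝕜 ι κ : Type*} [RCLike 𝕜] [Fintype ι] [DecidableEq ι] [Fintype κ] [DecidableEq κ]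

theorem Matrix.IsHermitian.eq_conj_diagonal {A : Matrix ι ι 𝕜} (hA : A.IsHermitian) :
    A = (hA.eigenvectorUnitary : Matrix ι ι 𝕜) * diagonal (RCLike.ofReal ∘ hA.eigenvalues) *
      star (hA.eigenvectorUnitary : Matrix ι ι 𝕜) := by
  simpa using hA.spectral_theorem

theorem Matrix.IsHermitian.eq_smul_one_of_eigenvalues_eq {A : Matrix ι ι 𝕜} (hA : A.IsHermitian)
    {c : ℝ} (h : ∀ i, hA.eigenvalues i = c) : A = c • (1 : Matrix ι ι 𝕜) := by
  have hdiag : diagonal (RCLike.ofReal ∘ hA.eigenvalues) = c • (1 : Matrix ι ι 𝕜) := by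
    ext i j
    by_cases hij : i = j <;> simp [hij, h, RCLike.real_smul_eq_coe_mul]
  rw [hA.eq_conj_diagonal, hdiag, mul_smul_comm, smul_mul_assoc, mul_one,
    Unitary.mul_star_self_of_mem (SetLike.coe_mem _)]

theorem Matrix.IsHermitian.re_det_one_add_smul_kronecker {A : Matrix ι ι 𝕜} (hA : A.IsHermitian)
    {V : Matrix κ κ 𝕜} (hV : V ∈ unitaryGroup κ 𝕜) (b : κ → ℝ) (s : ℝ) :
    RCLike.re (det (1 + s • (A ⊗ₖ (V * diagonal (RCLike.ofReal ∘ b) * star V)))) =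
      ∏ i, ∏ j, (1 + s * hA.eigenvalues i * b j) := by
  have hsA : s • A = (hA.eigenvectorUnitary : Matrix ι ι 𝕜) *
      diagonal (RCLike.ofReal ∘ (s • hA.eigenvalues)) *
        star (hA.eigenvectorUnitary : Matrix ι ι 𝕜) := by
    conv_lhs => rw [hA.eq_conj_diagonal]
    rw [← smul_mul_assoc, ← mul_smul_comm, ← diagonal_smul]
    congr 3
    ext i
    simp [RCLike.real_smul_eq_coe_mul]
  rw [← smul_kronecker, hsA, det_one_add_kronecker_conj_diagonal (SetLike.coe_mem _) hV]
  simp only [Function.comp_apply, Pi.smul_apply, smul_eq_mul]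
  norm_cast

end Hermitian

theorem stmt4_general {n m p : ℕ}
    (Ctx : Matrix (Fin n) (Fin n) ℂ) (hCtx : Ctx.PosSemidef)
    (P : Matrix (Fin p) (Fin n) ℂ) (hP : P * Ctx * Pᴴ ≠ 0)
    (σsq : ℝ) (hσ : 0 < σsq)
    (Crx : Matrix (Fin m) (Fin m) ℂ) (hCrx : Crx.PosSemidef)
    (τ : ℝ) (htr : Crx.trace = (τ : ℂ))
    (hne : Crx ≠ (τ / m : ℝ) • (1 : Matrix (Fin m) (Fin m) ℂ)) :
    Real.log ((1 + (1 / σsq) • ((P * Ctx * Pᴴ) ⊗ₖ Crx)).det.re)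
      < Real.log ((1 + (1 / σsq) •
          ((P * Ctx * Pᴴ) ⊗ₖ ((τ / m : ℝ) • (1 : Matrix (Fin m) (Fin m) ℂ)))).det.re) := by
  have hApsd := hCtx.mul_mul_conjTranspose_same P
  have hA := hApsd.isHermitian
  have hB := hCrx.isHermitian
  have hμsum : ∑ j, hB.eigenvalues j = τ := by
    have h := hB.trace_eq_sum_eigenvalues.symm.trans htr
    simp only [Complex.coe_algebraMap] at h
    exact_mod_cast h
  have hμne : ∃ j k, hB.eigenvalues j ≠ hB.eigenvalues k := by
    by_contra! hconst
    refine hne (hB.eq_smul_one_of_eigenvalues_eq fun j => ?_)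
    have hm : (m : ℝ) ≠ 0 := by exact_mod_cast (Fin.pos j).ne'
    rw [← hμsum, Finset.sum_congr rfl fun k _ => hconst k j]
    simp [hm]
  have hApos : ∃ i, 0 < 1 / σsq * hA.eigenvalues i := by
    obtain ⟨i, hi⟩ := Function.ne_iff.mp (hA.eigenvalues_eq_zero_iff.not.mpr hP)
    exact ⟨i, mul_pos (by positivity) ((hApsd.eigenvalues_nonneg i).lt_of_ne' hi)⟩
  have hscalar : (τ / m : ℝ) • (1 : Matrix (Fin m) (Fin m) ℂ) =
      1 * diagonal (RCLike.ofReal ∘ fun _ => τ / m) * star 1 := by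
    ext i j
    by_cases hij : i = j <;> simp [hij]
  have hdetB := hA.re_det_one_add_smul_kronecker (SetLike.coe_mem hB.eigenvectorUnitary)
    hB.eigenvalues (1 / σsq)
  have hdetI := hA.re_det_one_add_smul_kronecker (one_mem (unitaryGroup (Fin m) ℂ))
    (fun _ => τ / m) (1 / σsq)
  simp only [RCLike.re_to_complex, ← hB.eq_conj_diagonal, ← hscalar] at hdetB hdetI
  rw [hdetB, hdetI]
  simpa [hμsum, mul_assoc] using log_prod_prod_one_add_mul_lt
    (fun i => mul_nonneg (by positivity) (hApsd.eigenvalues_nonneg i)) hApos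
    hCrx.eigenvalues_nonneg hμne

/-- For PSD Hermitian `C_tx`, `P` with `P C_tx P^H ≠ 0`, `σ² > 0`, and PSD
Hermitian `C_rx ∈ ℂ^{m×m}` (`m ≥ 2`) with `tr C_rx = τ > 0` and `C_rx ≠ (τ/m) I`, the CMI
`log det(I + (1/σ²)(P C_tx P^H) ⊗ C_rx)` is strictly smaller than its value at the
scaled identity `(τ/m) I`. -/
theorem stmt4 {n m p : ℕ} (hm : 2 ≤ m)
    (Ctx : Matrix (Fin n) (Fin n) ℂ) (hCtx : Ctx.PosSemidef)
    (P : Matrix (Fin p) (Fin n) ℂ) (hP : P * Ctx * Pᴴ ≠ 0)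
    (σsq : ℝ) (hσ : 0 < σsq)
    (Crx : Matrix (Fin m) (Fin m) ℂ) (hCrx : Crx.PosSemidef)
    (τ : ℝ) (hτ : 0 < τ) (htr : Crx.trace = (τ : ℂ))
    (hne : Crx ≠ (τ / m : ℝ) • (1 : Matrix (Fin m) (Fin m) ℂ)) :
    Real.log ((1 + (1 / σsq) • ((P * Ctx * Pᴴ) ⊗ₖ Crx)).det.re)
      < Real.log ((1 + (1 / σsq) •
          ((P * Ctx * Pᴴ) ⊗ₖ ((τ / m : ℝ) • (1 : Matrix (Fin m) (Fin m) ℂ)))).det.re) :=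
  stmt4_general Ctx hCtx P hP σsq hσ Crx hCrx τ htr hne
end

section
/- Let C ∈ ℂ^{n×n} be positive semidefinite Hermitian with eigendecomposition C = U Λ U^H where the eigenvalues λ_1 ≥ λ_2 ≥ … ≥ λ_n on the diagonal of Λ are in decreasing order. Among all matrices P ∈ ℂ^{p×n} (p ≤ n) with P P^H = ρ I_p (equal power per pilot, sub-unitary scaled rows), the matrix P = √ρ · (first p rows of U^H) maximizes log det(I + (1/σ²) P C P^H), achieving the value Σ_{i=1}^p log(1 + (ρ/σ²) λ_i). -/
/-!
Put `R = P U`. Then `R Rᴴ = ρ I` and `I + σ⁻² P C Pᴴ = R D Rᴴ` with `D = diag (ρ⁻¹ + λᵢ / σ²)`.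
By the Cauchy–Binet expansion, `det (R D Rᴴ)` is the sum over `p`-element column sets `S` of
`(∏_{i ∈ S} Dᵢ) |det R_S|²`, while `det (R Rᴴ) = ρ ^ p` is the sum of the weights `|det R_S|²`.
Hence `det (R D Rᴴ) ≤ ρ ^ p · max_S ∏_{i ∈ S} Dᵢ`, and since `D` is decreasing the maximum is
attained at the first `p` indices. For `P = √ρ · (first p rows of Uᴴ)` the matrix is diagonal
and the bound is an equality.
-/

open Matrix Finset
open scoped ComplexOrder

theorem Fin.castLE_le_of_strictMono {p n : ℕ} (hpn : p ≤ n) {g : Fin p → Fin n}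
    (hg : StrictMono g) (i : Fin p) : Fin.castLE hpn i ≤ g i := by
  rw [Fin.le_def, Fin.val_castLE, ← Fin.card_Iio i, ← Fin.card_Iio (g i)]
  exact card_le_card_of_injOn g (fun j hj => by simpa using hg (by simpa using hj))
    hg.injective.injOn

theorem Finset.prod_comp_le_prod_castLE {R : Type*} [CommMonoidWithZero R] [Preorder R]
    [ZeroLEOneClass R] [PosMulMono R] {p n : ℕ} (hpn : p ≤ n) {b : Fin n → R}
    (hb0 : ∀ i, 0 ≤ b i) (hb : Antitone b) {f : Fin p → Fin n} (hf : Function.Injective f) :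
    ∏ i, b (f i) ≤ ∏ i, b (Fin.castLE hpn i) := by
  classical
  have hcard : #(univ.image f) = p := by simp [card_image_of_injective _ hf]
  set g := (univ.image f).orderEmbOfFin hcard
  calc ∏ i, b (f i) = ∏ i, b (g i) := by
        rw [← prod_image fun _ _ _ _ h => hf h, ← map_orderEmbOfFin_univ _ hcard, prod_map]
        rfl
    _ ≤ ∏ i, b (Fin.castLE hpn i) :=
        prod_le_prod (fun _ _ => hb0 _)
          fun i _ => hb (Fin.castLE_le_of_strictMono hpn g.strictMono i)

namespace Matrix

variable {m n R : Type*} [Fintype n]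

theorem det_mul_eq_sum_prod_mul_det_submatrix [Fintype m] [DecidableEq m] [CommRing R]
    (M : Matrix m n R) (N : Matrix n m R) :
    (M * N).det = ∑ f : m → n, (∏ i, N (f i) i) * (M.submatrix id f).det := by
  simp_rw [det_apply', mul_apply, prod_univ_sum, Fintype.piFinset_univ, mul_sum]
  rw [sum_comm]
  refine sum_congr rfl fun f _ => sum_congr rfl fun σ _ => ?_
  simp only [submatrix_apply, id_eq, prod_mul_distrib]
  ring

/-- Cauchy–Binet over all column selections `f : m → n` instead of column subsets, whence the
factor `(card m)!`: the expansion of `det (Q * (D * Qᴴ))` is summed over the reorderings `f ∘ σ`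
of each `f`, which collects its terms into squared minors. -/
theorem factorial_card_mul_det_mul_diagonal_mul_conjTranspose [Fintype m] [DecidableEq m]
    [DecidableEq n] [CommRing R] [StarRing R] (Q : Matrix m n R) (d : n → R) :
    ((Fintype.card m).factorial : R) * (Q * diagonal d * Qᴴ).det
      = ∑ f : m → n, (∏ i, d (f i)) * ((Q.submatrix id f).det * star (Q.submatrix id f).det) := by
  set t : (m → n) → R := fun f => (∏ i, d (f i) * star (Q i (f i))) * (Q.submatrix id f).det
  have h_expand : (Q * diagonal d * Qᴴ).det = ∑ f, t f := by
    rw [Matrix.mul_assoc, det_mul_eq_sum_prod_mul_det_submatrix]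
    simp [t, diagonal_mul, conjTranspose_apply]
  have h_reindex (σ : Equiv.Perm m) : ∑ f, t (f ∘ σ) = ∑ f, t f :=
    (Equiv.arrowCongr σ.symm (Equiv.refl n)).sum_comp t
  have h_orbit (f : m → n) : ∑ σ : Equiv.Perm m, t (f ∘ σ)
      = (∏ i, d (f i)) * ((Q.submatrix id f).det * star (Q.submatrix id f).det) := by
    set Y := Q.submatrix id f
    have h_term (σ : Equiv.Perm m) : t (f ∘ σ)
        = (∏ i, d (f i)) * Y.det * (Equiv.Perm.sign σ * ∏ i, Yᴴ (σ i) i) := by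
      have h_minor : (Q.submatrix id (f ∘ σ)).det = Equiv.Perm.sign σ * Y.det :=
        det_permute' σ Y
      simp only [t, h_minor, prod_mul_distrib, Function.comp_apply,
        Equiv.prod_comp σ (fun i => d (f i))]
      simp only [Y, conjTranspose_apply, submatrix_apply, id_eq]
      ring
    simp_rw [h_term, ← mul_sum, ← det_apply', det_conjTranspose]
    ring
  calc ((Fintype.card m).factorial : R) * (Q * diagonal d * Qᴴ).det
      = ∑ σ : Equiv.Perm m, ∑ f, t (f ∘ σ) := by
        simp [h_reindex, h_expand, Fintype.card_perm]
    _ = _ := by rw [sum_comm]; exact sum_congr rfl fun f _ => h_orbit f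

theorem re_det_mul_diagonal_mul_conjTranspose_le {p n : ℕ} (hpn : p ≤ n)
    (Q : Matrix (Fin p) (Fin n) ℂ) {b : Fin n → ℝ} (hb0 : ∀ i, 0 ≤ b i) (hb : Antitone b) :
    (Q * diagonal (fun i => (b i : ℂ)) * Qᴴ).det.re
      ≤ (Q * Qᴴ).det.re * ∏ i, b (Fin.castLE hpn i) := by
  set w : (Fin p → Fin n) → ℝ := fun f => Complex.normSq (Q.submatrix id f).det
  have h_expand : (p.factorial : ℝ) * (Q * diagonal (fun i => (b i : ℂ)) * Qᴴ).det.re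
      = ∑ f, (∏ i, b (f i)) * w f := by
    simpa [Complex.mul_re, Complex.mul_conj, ← Complex.ofReal_prod, w] using
      congrArg Complex.re
        (factorial_card_mul_det_mul_diagonal_mul_conjTranspose Q fun i => (b i : ℂ))
  have h_gram : (p.factorial : ℝ) * (Q * Qᴴ).det.re = ∑ f, w f := by
    simpa [Complex.mul_conj, w] using
      congrArg Complex.re (factorial_card_mul_det_mul_diagonal_mul_conjTranspose Q 1)
  have h_term (f : Fin p → Fin n) :
      (∏ i, b (f i)) * w f ≤ (∏ i, b (Fin.castLE hpn i)) * w f := by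
    by_cases hf : Function.Injective f
    · exact mul_le_mul_of_nonneg_right (prod_comp_le_prod_castLE hpn hb0 hb hf)
        (Complex.normSq_nonneg _)
    · obtain ⟨i, j, hij, hne⟩ := Function.not_injective_iff.mp hf
      have : (Q.submatrix id f).det = 0 := det_zero_of_column_eq hne fun k => by simp [hij]
      simp [w, this]
  refine le_of_mul_le_mul_left ?_ (Nat.cast_pos.mpr p.factorial_pos)
  calc (p.factorial : ℝ) * (Q * diagonal (fun i => (b i : ℂ)) * Qᴴ).det.re
      ≤ ∑ f, (∏ i, b (Fin.castLE hpn i)) * w f := h_expand ▸ sum_le_sum fun f _ => h_term f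
    _ = (p.factorial : ℝ) * ((Q * Qᴴ).det.re * ∏ i, b (Fin.castLE hpn i)) := by
        rw [← mul_sum, ← h_gram]; ring

theorem one_add_smul_mul_diagonal_mul_conjTranspose {𝕜 : Type*} [Field 𝕜] [StarRing 𝕜]
    [DecidableEq m] [DecidableEq n] {A : Matrix m n 𝕜} {ρ : 𝕜} (hρ : ρ ≠ 0)
    (hA : A * Aᴴ = ρ • 1) (c : 𝕜) (d : n → 𝕜) :
    1 + c • (A * diagonal d * Aᴴ) = A * diagonal (fun i => ρ⁻¹ + c * d i) * Aᴴ := by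
  have h_diag : diagonal (fun i => ρ⁻¹ + c * d i) = ρ⁻¹ • 1 + c • diagonal d := by
    ext i j
    rcases eq_or_ne i j with rfl | h <;> simp [*]
  rw [h_diag, Matrix.mul_add, Matrix.add_mul, Matrix.mul_smul, Matrix.mul_one, Matrix.smul_mul,
    hA, smul_smul, inv_mul_cancel₀ hρ, one_smul, Matrix.mul_smul, Matrix.smul_mul]

theorem re_det_one_add_smul_mul_diagonal_mul_conjTranspose_le {p n : ℕ} (hpn : p ≤ n)
    {A : Matrix (Fin p) (Fin n) ℂ} {ρ : ℝ} (hρ : 0 < ρ) (hA : A * Aᴴ = (ρ : ℂ) • 1) {c : ℝ}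
    (hc : 0 ≤ c) {d : Fin n → ℝ} (hd0 : ∀ i, 0 ≤ d i) (hd : Antitone d) :
    (1 + c • (A * diagonal (fun i => (d i : ℂ)) * Aᴴ)).det.re
      ≤ ∏ i, (1 + ρ * c * d (Fin.castLE hpn i)) := by
  have h_conj : 1 + c • (A * diagonal (fun i => (d i : ℂ)) * Aᴴ)
      = A * diagonal (fun i => ((ρ⁻¹ + c * d i : ℝ) : ℂ)) * Aᴴ := by
    rw [← Complex.coe_smul,
      one_add_smul_mul_diagonal_mul_conjTranspose (by exact_mod_cast hρ.ne') hA]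
    push_cast
    rfl
  calc (1 + c • (A * diagonal (fun i => (d i : ℂ)) * Aᴴ)).det.re
      ≤ (A * Aᴴ).det.re * ∏ i, (ρ⁻¹ + c * d (Fin.castLE hpn i)) := by
        rw [h_conj]
        exact re_det_mul_diagonal_mul_conjTranspose_le hpn A
          (fun i => by have := hd0 i; positivity) fun i j hij => by gcongr; exact hd hij
    _ = ∏ i, (1 + ρ * c * d (Fin.castLE hpn i)) := by
        rw [hA, det_smul, det_one, mul_one, ← Complex.ofReal_pow, Complex.ofReal_re,
          Fintype.card_fin, ← Fin.prod_const p ρ, ← prod_mul_distrib]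
        refine prod_congr rfl fun i _ => ?_
        field_simp

theorem submatrix_mul_mul_conjTranspose_submatrix {l α : Type*} [Fintype m]
    [NonUnitalSemiring α] [StarRing α] (A : Matrix m n α) (M : Matrix n n α) (e : l → m) :
    A.submatrix e id * M * (A.submatrix e id)ᴴ = (A * M * Aᴴ).submatrix e e := by
  rw [conjTranspose_submatrix, ← submatrix_id_id M,
    ← submatrix_mul A M e id id Function.bijective_id,
    ← submatrix_mul (A * M) Aᴴ e id e Function.bijective_id, submatrix_id_id]

theorem sqrt_smul_submatrix_mul_mul_conjTranspose {l : Type*} [Fintype m] {ρ : ℝ}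
    (hρ : 0 ≤ ρ) (A : Matrix m n ℂ) (M : Matrix n n ℂ) (e : l → m) :
    (√ρ • A.submatrix e id) * M * (√ρ • A.submatrix e id)ᴴ
      = (ρ : ℂ) • (A * M * Aᴴ).submatrix e e := by
  rw [conjTranspose_smul, star_trivial, Matrix.smul_mul, Matrix.smul_mul, Matrix.mul_smul,
    smul_smul, Real.mul_self_sqrt hρ, submatrix_mul_mul_conjTranspose_submatrix, Complex.coe_smul]

theorem conjTranspose_mul_conj_mul_of_mem_unitaryGroup [DecidableEq n] {U : Matrix n n ℂ}
    (hU : U ∈ unitaryGroup n ℂ) (D : Matrix n n ℂ) : Uᴴ * (U * D * Uᴴ) * U = D := by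
  have hUU : Uᴴ * U = 1 := mem_unitaryGroup_iff'.mp hU
  simp only [Matrix.mul_assoc, hUU, Matrix.mul_one, ← Matrix.mul_assoc Uᴴ U, Matrix.one_mul]

theorem nonneg_of_posSemidef_mul_diagonal_mul_conjTranspose [DecidableEq n]
    {U : Matrix n n ℂ} (hU : U ∈ unitaryGroup n ℂ) {d : n → ℝ}
    (h : (U * diagonal (fun i => (d i : ℂ)) * Uᴴ).PosSemidef) (i : n) : 0 ≤ d i := by
  have h_diag := h.conjTranspose_mul_mul_same U
  rw [conjTranspose_mul_conj_mul_of_mem_unitaryGroup hU] at h_diag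
  exact_mod_cast posSemidef_diagonal_iff.mp h_diag i

theorem re_det_one_add_smul_diagonal [DecidableEq n] (c : ℝ) (d : n → ℝ) :
    (1 + c • diagonal (fun i => (d i : ℂ))).det.re = ∏ i, (1 + c * d i) := by
  have h_diag :
      1 + c • diagonal (fun i => (d i : ℂ)) = diagonal fun i => ((1 + c * d i : ℝ) : ℂ) := by
    ext i j
    rcases eq_or_ne i j with rfl | h <;> simp [*]
  rw [h_diag, det_diagonal, ← Complex.ofReal_prod, Complex.ofReal_re]

theorem re_det_one_add_smul_mul_mul_conjTranspose_pos [Fintype m] [DecidableEq m]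
    {C : Matrix n n ℂ} (hC : C.PosSemidef) (P : Matrix m n ℂ) {c : ℝ} (hc : 0 ≤ c) :
    0 < (1 + c • (P * C * Pᴴ)).det.re :=
  (Complex.pos_iff.mp
    (PosDef.one.add_posSemidef ((hC.mul_mul_conjTranspose_same P).smul hc)).det_pos).1

end Matrix

/-- Let `C = U Λ U^H` be PSD with `U` unitary and eigenvalues
`λ_1 ≥ … ≥ λ_n` in decreasing order. Among all `P ∈ ℂ^{p×n}` (`p ≤ n`) with
`P P^H = ρ I_p`, the matrix `P = √ρ · (first p rows of U^H)` maximizes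
`log det(I + (1/σ²) P C P^H)`, achieving the value `Σ_{i=1}^p log(1 + (ρ/σ²) λ_i)`. -/
theorem stmt12 {n p : ℕ} (hpn : p ≤ n)
    (C U : Matrix (Fin n) (Fin n) ℂ) (lam : Fin n → ℝ)
    (hC : C.PosSemidef) (hU : U ∈ Matrix.unitaryGroup (Fin n) ℂ)
    (hdec : C = U * Matrix.diagonal (fun i => (lam i : ℂ)) * Uᴴ)
    (hsort : ∀ i j : Fin n, i ≤ j → lam j ≤ lam i)
    (ρ σsq : ℝ) (hρ : 0 < ρ) (hσ : 0 < σsq) :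
    (((Real.sqrt ρ : ℝ) • (Uᴴ).submatrix (Fin.castLE hpn) id) *
        ((Real.sqrt ρ : ℝ) • (Uᴴ).submatrix (Fin.castLE hpn) id)ᴴ
        = (ρ : ℂ) • (1 : Matrix (Fin p) (Fin p) ℂ))
    ∧ (Real.log ((1 + (1 / σsq) •
          (((Real.sqrt ρ : ℝ) • (Uᴴ).submatrix (Fin.castLE hpn) id) * C *
            ((Real.sqrt ρ : ℝ) • (Uᴴ).submatrix (Fin.castLE hpn) id)ᴴ)).det.re)
        = ∑ i : Fin p, Real.log (1 + ρ / σsq * lam (Fin.castLE hpn i)))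
    ∧ (∀ P : Matrix (Fin p) (Fin n) ℂ, P * Pᴴ = (ρ : ℂ) • (1 : Matrix (Fin p) (Fin p) ℂ) →
        Real.log ((1 + (1 / σsq) • (P * C * Pᴴ)).det.re)
          ≤ ∑ i : Fin p, Real.log (1 + ρ / σsq * lam (Fin.castLE hpn i))) := by
  have hlam : ∀ i, 0 ≤ lam i :=
    nonneg_of_posSemidef_mul_diagonal_mul_conjTranspose hU (hdec ▸ hC)
  have hc : 0 ≤ 1 / σsq := by positivity
  have h_log_prod : ∑ i : Fin p, Real.log (1 + ρ / σsq * lam (Fin.castLE hpn i))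
      = Real.log (∏ i : Fin p, (1 + ρ / σsq * lam (Fin.castLE hpn i))) :=
    (Real.log_prod fun i _ => by have := hlam (Fin.castLE hpn i); positivity).symm
  refine ⟨?_, ?_, fun P hP => ?_⟩
  · have hUhU : Uᴴ * U = 1 := mem_unitaryGroup_iff'.mp hU
    have h := sqrt_smul_submatrix_mul_mul_conjTranspose hρ.le Uᴴ 1 (Fin.castLE hpn)
    rwa [Matrix.mul_one, Matrix.mul_one, conjTranspose_conjTranspose, hUhU,
      submatrix_one _ (Fin.castLE_injective hpn)] at h
  · rw [sqrt_smul_submatrix_mul_mul_conjTranspose hρ.le, conjTranspose_conjTranspose, hdec,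
      conjTranspose_mul_conj_mul_of_mem_unitaryGroup hU,
      submatrix_diagonal _ _ (Fin.castLE_injective hpn), Function.comp_def, Complex.coe_smul,
      smul_smul, one_div_mul_eq_div, re_det_one_add_smul_diagonal, h_log_prod]
  · have hUU : U * Uᴴ = 1 := mem_unitaryGroup_iff.mp hU
    have hR : P * U * (P * U)ᴴ = (ρ : ℂ) • 1 := by
      rw [conjTranspose_mul, Matrix.mul_assoc, ← Matrix.mul_assoc U, hUU, Matrix.one_mul, hP]
    have h_conj : P * C * Pᴴ = P * U * diagonal (fun i => (lam i : ℂ)) * (P * U)ᴴ := by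
      simp only [hdec, conjTranspose_mul, Matrix.mul_assoc]
    rw [h_log_prod]
    refine Real.log_le_log (re_det_one_add_smul_mul_mul_conjTranspose_pos hC P hc) ?_
    simpa only [h_conj, mul_one_div] using
      re_det_one_add_smul_mul_diagonal_mul_conjTranspose_le hpn hρ hR hc hlam hsort
end

section
/- Let C_rx ∈ ℂ^{m×m} be positive semidefinite Hermitian with m ≥ 2 and tr(C_rx) = τ > 0. Then for every positive semidefinite Hermitian A ∈ ℂ^{p×p} and σ² > 0, log det(I + (1/σ²) A ⊗ C_rx) = log det(I + (1/σ²) τ A) for all such A if and only if rank(C_rx) = 1. -/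
open Matrix Kronecker
open scoped ComplexOrder

/-!
If `C = u w` has rank one, then `A ⊗ C = (A ⊗ u) (1 ⊗ w)`, and `det (1 + X Y) = det (1 + Y X)`
collapses `det (1 + A ⊗ C)` to `det (1 + (w u) A)`, where the scalar `w u` is `tr C = τ`.
Conversely, testing with `A = 1 ∈ ℂ^{1×1}` and `σ² = 1` gives `∏ (1 + λᵢ) = 1 + ∑ λᵢ` for the
eigenvalues `λᵢ ≥ 0` of `C`. Expanding the product shows that `λᵢ λⱼ = 0` whenever `i ≠ j`, so at
most one eigenvalue is nonzero, and at least one is since `∑ λᵢ = τ > 0`.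
-/

namespace Finset

variable {ι R : Type*} [CommRing R] [LinearOrder R] [IsStrictOrderedRing R] {f : ι → R}

theorem one_add_sum_le_prod_one_add_s16 (s : Finset ι) (hf : ∀ i ∈ s, 0 ≤ f i) :
    1 + ∑ i ∈ s, f i ≤ ∏ i ∈ s, (1 + f i) := by
  induction s using Finset.cons_induction with
  | empty => simp
  | cons a s ha ih =>
    rw [sum_cons, prod_cons]
    have ha0 : 0 ≤ f a := hf a (mem_cons_self a s)
    have hs := fun i hi => hf i (mem_cons_of_mem hi)
    nlinarith [ih hs, sum_nonneg hs]

theorem one_add_sum_add_mul_le_prod_one_add [DecidableEq ι] {s : Finset ι} {i j : ι}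
    (hi : i ∈ s) (hj : j ∈ s) (hij : i ≠ j) (hf : ∀ k ∈ s, 0 ≤ f k) :
    1 + ∑ k ∈ s, f k + f i * f j ≤ ∏ k ∈ s, (1 + f k) := by
  have hj' : j ∈ s.erase i := mem_erase.mpr ⟨hij.symm, hj⟩
  set t := (s.erase i).erase j
  have ht : ∀ k ∈ t, 0 ≤ f k := fun k hk => hf k (mem_of_mem_erase (mem_of_mem_erase hk))
  rw [← add_sum_erase _ _ hi, ← add_sum_erase _ _ hj', ← mul_prod_erase _ _ hi,
    ← mul_prod_erase _ _ hj']
  have hfi := hf i hi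
  have hfj := hf j hj
  nlinarith [one_add_sum_le_prod_one_add_s16 t ht, sum_nonneg ht, mul_nonneg hfi hfj,
    mul_nonneg (mul_nonneg hfi hfj) (sum_nonneg ht)]

end Finset

namespace Matrix

variable {m n p : Type*} [Fintype m] [Fintype n] [Fintype p]

theorem exists_eq_mul_of_rank_eq_one {K : Type*} [Field K] {C : Matrix m n K}
    (h : C.rank = 1) : ∃ (u : Matrix m Unit K) (w : Matrix Unit n K), C = u * w := by
  rw [rank_eq_finrank_span_cols, finrank_eq_one_iff'] at h
  obtain ⟨v, -, hv⟩ := h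
  choose c hc using fun j => hv ⟨C.col j, Submodule.subset_span (Set.mem_range_self j)⟩
  refine ⟨replicateCol Unit v, replicateRow Unit c, ?_⟩
  ext i j
  have := congrArg (fun x : Submodule.span K (Set.range C.col) => (x : m → K) i) (hc j)
  simp only [SetLike.val_smul, Pi.smul_apply, smul_eq_mul, col_apply] at this
  simp [mul_apply, ← this, mul_comm]

variable [DecidableEq n] [DecidableEq p]

theorem det_one_add_kronecker_mul {R : Type*} [CommRing R] (A : Matrix p p R)
    (u : Matrix n Unit R) (w : Matrix Unit n R) :
    det (1 + A ⊗ₖ (u * w)) = det (1 + (u * w).trace • A) := by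
  have hwu : w * u = (u * w).trace • (1 : Matrix Unit Unit R) := by
    rw [trace_mul_comm]
    ext ⟨⟩ ⟨⟩
    simp [trace]
  calc det (1 + A ⊗ₖ (u * w))
      = det (1 + (A ⊗ₖ u) * ((1 : Matrix p p R) ⊗ₖ w)) := by rw [← mul_kronecker_mul, mul_one]
    _ = det (1 + (1 ⊗ₖ w) * (A ⊗ₖ u)) := det_one_add_mul_comm _ _
    _ = det ((1 + (u * w).trace • A) ⊗ₖ (1 : Matrix Unit Unit R)) := by
        rw [← mul_kronecker_mul, one_mul, hwu, kronecker_smul, ← smul_kronecker, add_kronecker,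
          one_kronecker_one]
    _ = det (1 + (u * w).trace • A) := by simp [det_kronecker]

variable {𝕜 : Type*} [RCLike 𝕜]

theorem IsHermitian.det_one_add {A : Matrix n n 𝕜} (hA : A.IsHermitian) :
    det (1 + A) = ((∏ i, (1 + hA.eigenvalues i) : ℝ) : 𝕜) := by
  conv_lhs => rw [hA.spectral_theorem, ← map_one (Unitary.conjStarAlgAut 𝕜 _ hA.eigenvectorUnitary),
    ← map_add, Unitary.conjStarAlgAut_apply]
  rw [det_conj_of_mul_eq_one (Unitary.mul_star_self_of_mem hA.eigenvectorUnitary.2)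
    (Unitary.star_mul_self_of_mem hA.eigenvectorUnitary.2), ← diagonal_one, diagonal_add,
    det_diagonal]
  simp

theorem PosSemidef.rank_eq_one_of_prod_one_add_eigenvalues {C : Matrix n n 𝕜}
    (hC : C.PosSemidef) (hprod : ∏ i, (1 + hC.1.eigenvalues i) = 1 + ∑ i, hC.1.eigenvalues i)
    (hsum : ∑ i, hC.1.eigenvalues i ≠ 0) : C.rank = 1 := by
  have hnonneg : ∀ i ∈ Finset.univ, 0 ≤ hC.1.eigenvalues i := fun i _ => hC.eigenvalues_nonneg i
  rw [hC.1.rank_eq_card_non_zero_eigs]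
  refine le_antisymm (Fintype.card_le_one_iff.mpr fun ⟨i, hi⟩ ⟨j, hj⟩ => Subtype.ext ?_)
    (Fintype.card_pos_iff.mpr ?_)
  · by_contra hij
    have hle := Finset.one_add_sum_add_mul_le_prod_one_add (Finset.mem_univ i)
      (Finset.mem_univ j) hij hnonneg
    have hpos := mul_pos ((hC.eigenvalues_nonneg i).lt_of_ne' hi)
      ((hC.eigenvalues_nonneg j).lt_of_ne' hj)
    linarith
  · obtain ⟨i, -, hi⟩ := Finset.exists_ne_zero_of_sum_ne_zero hsum
    exact ⟨⟨i, hi⟩⟩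

end Matrix

theorem stmt16_general {m : ℕ} (Crx : Matrix (Fin m) (Fin m) ℂ)
    (hCrx : Crx.PosSemidef) (τ : ℝ) (hτ : 0 < τ) (htr : Crx.trace = (τ : ℂ)) :
    (∀ (σsq : ℝ), 0 < σsq → ∀ (p : ℕ) (A : Matrix (Fin p) (Fin p) ℂ), A.PosSemidef →
        Real.log ((1 + (1 / σsq) • (A ⊗ₖ Crx)).det.re)
          = Real.log ((1 + (1 / σsq) • ((τ : ℝ) • A)).det.re))
      ↔ Crx.rank = 1 := by
  have hsum : ∑ i, hCrx.1.eigenvalues i = τ := by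
    have h := hCrx.1.trace_eq_sum_eigenvalues.symm.trans htr
    simp only [← RCLike.ofReal_sum] at h
    exact RCLike.ofReal_injective h
  constructor
  · intro h
    have hL : (1 + (1 / (1 : ℝ)) • ((1 : Matrix (Fin 1) (Fin 1) ℂ) ⊗ₖ Crx)).det.re
        = ∏ i, (1 + hCrx.1.eigenvalues i) := by
      rw [one_div_one, one_smul, ← one_kronecker_one, ← kronecker_add, det_kronecker,
        hCrx.1.det_one_add, det_one, one_pow, one_mul, Fintype.card_fin, pow_one]
      exact Complex.ofReal_re _
    have hR : (1 + (1 / (1 : ℝ)) • (τ • (1 : Matrix (Fin 1) (Fin 1) ℂ))).det.re = 1 + τ := by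
      simp [det_unique]
    have hprod : ∏ i, (1 + hCrx.1.eigenvalues i) = 1 + τ := by
      have h1 := h 1 one_pos 1 1 PosSemidef.one
      rw [hL, hR] at h1
      have hpos : 0 < ∏ i, (1 + hCrx.1.eigenvalues i) :=
        Finset.prod_pos fun i _ => by linarith [hCrx.eigenvalues_nonneg i]
      exact Real.log_injOn_pos hpos (Set.mem_Ioi.mpr (by linarith)) h1
    exact hCrx.rank_eq_one_of_prod_one_add_eigenvalues (by rw [hprod, hsum])
      (by rw [hsum]; exact hτ.ne')
  · intro hrank σsq _ p A _
    obtain ⟨u, w, rfl⟩ := exists_eq_mul_of_rank_eq_one hrank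
    rw [← smul_kronecker, det_one_add_kronecker_mul, htr, smul_comm, Complex.coe_smul]

/-- For PSD Hermitian `C_rx ∈ ℂ^{m×m}` with `m ≥ 2` and `tr C_rx = τ > 0`:
the equality `log det(I + (1/σ²) A ⊗ C_rx) = log det(I + (1/σ²) τ A)` holds for every
`σ² > 0` and every PSD Hermitian `A ∈ ℂ^{p×p}` (all sizes `p`) if and only if
`rank C_rx = 1`. -/
theorem stmt16 {m : ℕ} (hm : 2 ≤ m) (Crx : Matrix (Fin m) (Fin m) ℂ)
    (hCrx : Crx.PosSemidef) (τ : ℝ) (hτ : 0 < τ) (htr : Crx.trace = (τ : ℂ)) :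
    (∀ (σsq : ℝ), 0 < σsq → ∀ (p : ℕ) (A : Matrix (Fin p) (Fin p) ℂ), A.PosSemidef →
        Real.log ((1 + (1 / σsq) • (A ⊗ₖ Crx)).det.re)
          = Real.log ((1 + (1 / σsq) • ((τ : ℝ) • A)).det.re))
      ↔ Crx.rank = 1 :=
  stmt16_general Crx hCrx τ hτ htr
end
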